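/- arXiv:math/0110265 — 3 statements merged into one kernel-verified Lean document; each statement's English description precedes it below -/
import Mathlib

section
/- In an associative algebra with elements H, P, K satisfying [H,K] = -P, [P,K] = ωP², [H,P] = 0, one has the normal ordering formula P K^q = Σ_{k=0}^{q} (q!/(q-k)!) ω^k K^{q-k} P^{k+1} for all q ≥ 0. -/
open Finset

/-- In an associative unital `ℂ`-algebra with elements `H, P, K` satisfying
`[H,K] = -P`, `[P,K] = ωP²`, `[H,P] = 0`, one has the normal ordering formula
`P K^q = Σ_{k=0}^{q} (q!/(q-k)!) ω^k K^(q-k) P^(k+1)` for all `q ≥ 0`. -/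
theorem standard_PKq {A : Type*} [Ring A] [Algebra ℂ A] (ω : ℂ) (H P K : A)
    (hHK : H * K - K * H = -P) (hPK : P * K - K * P = ω • (P * P))
    (hHP : H * P - P * H = 0) (q : ℕ) :
    P * K ^ q = ∑ k ∈ range (q + 1),
      ((q.factorial : ℂ) / ((q - k).factorial : ℂ)) • ω ^ k • (K ^ (q - k) * P ^ (k + 1)) := by
  have h1 : P * K = K * P + ω • (P * P) := by
    rw [← hPK]; abel
  have hPpow : ∀ n : ℕ, P ^ n * K = K * P ^ n + ((n : ℂ) * ω) • P ^ (n + 1) := by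
    intro n
    induction n with
    | zero => simp
    | succ n ihn =>
      calc P ^ (n + 1) * K = P ^ n * (P * K) := by rw [pow_succ, mul_assoc]
        _ = P ^ n * (K * P + ω • (P * P)) := by rw [h1]
        _ = (P ^ n * K) * P + ω • P ^ (n + 1 + 1) := by
            rw [mul_add, mul_smul_comm, ← mul_assoc, ← mul_assoc, ← pow_succ, ← pow_succ]
        _ = (K * P ^ n + ((n : ℂ) * ω) • P ^ (n + 1)) * P + ω • P ^ (n + 1 + 1) := by rw [ihn]
        _ = K * P ^ (n + 1) + (((n : ℂ) * ω + ω)) • P ^ (n + 1 + 1) := by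
            rw [add_mul, smul_mul_assoc, mul_assoc, ← pow_succ, ← pow_succ, add_assoc,
              ← add_smul]
        _ = K * P ^ (n + 1) + ((((n : ℕ) + 1 : ℕ) : ℂ) * ω) • P ^ (n + 1 + 1) := by
            push_cast
            rw [add_mul, one_mul]
  induction q with
  | zero => simp
  | succ q ih =>
    set c : ℕ → ℂ := fun k => (q.factorial : ℂ) / ((q - k).factorial : ℂ) with hc
    have key : P * K ^ (q + 1)
        = ∑ k ∈ range (q + 1), ((c k * ω ^ k) • (K ^ (q - k + 1) * P ^ (k + 1))
            + (c k * ω ^ k * (((k : ℂ) + 1) * ω)) • (K ^ (q - k) * P ^ (k + 2))) := by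
      calc P * K ^ (q + 1) = (P * K ^ q) * K := by rw [pow_succ, ← mul_assoc]
        _ = ∑ k ∈ range (q + 1), (c k * ω ^ k) • (K ^ (q - k) * (P ^ (k + 1) * K)) := by
            rw [ih, sum_mul]
            refine sum_congr rfl fun k _ => ?_
            rw [smul_mul_assoc, smul_mul_assoc, smul_smul, mul_assoc]
        _ = _ := by
            refine sum_congr rfl fun k _ => ?_
            rw [hPpow (k + 1)]
            push_cast
            rw [mul_add, smul_add, ← mul_assoc, ← pow_succ, mul_smul_comm, smul_smul]
    rw [key, sum_add_distrib]
    rw [Finset.sum_range_succ' (fun k => ((((q+1).factorial : ℂ)) / (((q+1) - k).factorial : ℂ)) • ω ^ k • (K ^ ((q+1) - k) * P ^ (k + 1)))]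
    rw [Finset.sum_range_succ' (fun k => (c k * ω ^ k) • (K ^ (q - k + 1) * P ^ (k + 1)))]
    have h0 : (c 0 * ω ^ 0) • (K ^ (q - 0 + 1) * P ^ (0 + 1))
        = ((((q+1).factorial : ℂ)) / (((q+1) - 0).factorial : ℂ)) • ω ^ 0 • (K ^ ((q+1) - 0) * P ^ (0 + 1)) := by
      simp [hc, div_self, Nat.cast_ne_zero.mpr (Nat.factorial_ne_zero _)]
    rw [h0, add_right_comm]
    congr 1
    -- now: Σ_{range q} g(k+1) + Σ_{range (q+1)} h k = Σ_{range (q+1)} F(k+1)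
    rw [Finset.sum_range_succ (fun k => (c k * ω ^ k * (((k : ℂ) + 1) * ω)) • (K ^ (q - k) * P ^ (k + 2)))]
    rw [Finset.sum_range_succ (fun k => ((((q+1).factorial : ℂ)) / (((q+1) - (k+1)).factorial : ℂ)) • ω ^ (k+1) • (K ^ ((q+1) - (k+1)) * P ^ ((k+1) + 1)))]
    rw [← add_assoc, ← sum_add_distrib]
    congr 1
    · refine sum_congr rfl fun k hk => ?_
      have hk' : k < q := mem_range.mp hk
      simp only [hc]
      have e1 : q + 1 - (k + 1) = q - k := by omega
      have e2 : q - k = (q - (k+1)) + 1 := by omega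
      have e3 : q - (k + 1) + 1 = q - k := by omega
      have hfac : ((q+1).factorial : ℂ) / ((q - k).factorial : ℂ)
          = (q.factorial : ℂ) / ((q - (k+1)).factorial : ℂ)
            + (q.factorial : ℂ) / ((q - k).factorial : ℂ) * ((k : ℂ) + 1) := by
        rw [e2, Nat.factorial_succ, Nat.factorial_succ]
        push_cast
        have hne : ((q - (k+1)).factorial : ℂ) ≠ 0 := Nat.cast_ne_zero.mpr (Nat.factorial_ne_zero _)
        have hne2 : ((q - (k+1) : ℕ) : ℂ) + 1 ≠ 0 :=
          Nat.cast_add_one_ne_zero (R := ℂ) (q - (k+1))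
        field_simp
        have hq : ((q : ℂ)) = ((q - (k+1) : ℕ) : ℂ) + (k : ℂ) + 1 := by
          push_cast [Nat.cast_sub (by omega : k + 1 ≤ q)]
          ring
        rw [hq]; ring
      rw [e1, smul_smul, e3, show k + 1 + 1 = k + 2 from rfl, ← add_smul]
      congr 1
      rw [hfac]
      ring
    · -- top terms equal: h q = F(q+1)
      simp only [hc, Nat.sub_self, Nat.add_sub_cancel]
      rw [smul_smul, Nat.factorial_succ]
      push_cast
      ring_nf
end

section
/- In an associative algebra with elements H, P, K satisfying [H,K] = -P, [P,K] = ωP², [H,P] = 0, one has H K^q = K^q H - Σ_{k=0}^{q-1} (q!/((k+1)(q-k-1)!)) ω^k K^{q-k-1} P^{k+1} for all q ≥ 0. -/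
open Finset

/-- In an associative unital `ℂ`-algebra with elements `H, P, K` satisfying
`[H,K] = -P`, `[P,K] = ωP²`, `[H,P] = 0`, one has
`H K^q = K^q H - Σ_{k=0}^{q-1} (q!/((k+1)(q-k-1)!)) ω^k K^(q-k-1) P^(k+1)` for all `q ≥ 0`. -/
theorem standard_HKq {A : Type*} [Ring A] [Algebra ℂ A] (ω : ℂ) (H P K : A)
    (hHK : H * K - K * H = -P) (hPK : P * K - K * P = ω • (P * P))
    (hHP : H * P - P * H = 0) (q : ℕ) :
    H * K ^ q = K ^ q * H - ∑ k ∈ range q,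
      ((q.factorial : ℂ) / (((k + 1) : ℂ) * ((q - k - 1).factorial : ℂ))) •
        ω ^ k • (K ^ (q - k - 1) * P ^ (k + 1)) := by
  have hHK' : H * K = K * H - P := by linear_combination (norm := noncomm_ring) hHK
  have hPK' : P * K = K * P + ω • (P * P) := by linear_combination (norm := noncomm_ring) hPK
  have pK : ∀ m : ℕ, P ^ m * K = K * P ^ m + (m : ℂ) • ω • P ^ (m + 1) := by
    intro m
    induction m with
    | zero => simp
    | succ m ih =>
      have h1 : P ^ (m+1) * K = P * (P ^ m * K) := by rw [pow_succ', mul_assoc]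
      have h2 : P * P ^ (m+1) = P ^ (m+2) := (pow_succ' P (m+1)).symm
      have h3 : P * P * P ^ m = P ^ (m+2) := by
        rw [mul_assoc, ← pow_succ']; exact (pow_succ' P (m+1)).symm
      have h4 : P * P ^ m = P ^ (m+1) := (pow_succ' P m).symm
      rw [h1, ih, mul_add, ← mul_assoc, hPK', add_mul, mul_smul_comm, mul_smul_comm,
        smul_mul_assoc, mul_assoc, h4, h2, h3]
      push_cast
      module
  have coeff : ∀ q k : ℕ, k < q →
      (((q+1).factorial : ℂ)) / (((k + 1) : ℂ) * (((q - k) : ℕ).factorial : ℂ)) =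
      ((q.factorial : ℂ)) / (((k + 1) : ℂ) * (((q - k - 1) : ℕ).factorial : ℂ))
        + ((q.factorial : ℂ)) / ((((q - k) : ℕ).factorial : ℂ)) := by
    intro q k h
    obtain ⟨m, rfl⟩ : ∃ m, q = k + m + 1 := ⟨q - k - 1, by omega⟩
    have e1 : k + m + 1 - k = m + 1 := by omega
    rw [e1, Nat.add_sub_cancel]
    have f1 : ((k + m + 1 + 1).factorial : ℂ) = (k + m + 2) * ((k+m+1).factorial) := by
      rw [show k+m+1+1 = k+m+2 from rfl, Nat.factorial_succ]; push_cast; ring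
    have f2 : ((m + 1).factorial : ℂ) = (m + 1) * (m.factorial) := by
      rw [Nat.factorial_succ]; push_cast; ring
    rw [f1, f2]
    have hk : ((k:ℂ) + 1) ≠ 0 := by exact_mod_cast (Nat.cast_ne_zero (R := ℂ)).mpr (Nat.succ_ne_zero k)
    have hm : ((m:ℂ) + 1) ≠ 0 := by exact_mod_cast (Nat.cast_ne_zero (R := ℂ)).mpr (Nat.succ_ne_zero m)
    have hf : ((m.factorial : ℂ)) ≠ 0 := Nat.cast_ne_zero.mpr m.factorial_ne_zero
    field_simp
    ring
  induction q with
  | zero => simp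
  | succ q ih =>
    -- key computation
    have key : H * K ^ (q+1) = K ^ (q+1) * H - K ^ q * P -
        ∑ k ∈ range q, ((q.factorial : ℂ) / (((k + 1) : ℂ) * ((q - k - 1).factorial : ℂ))) •
          ω ^ k • (K ^ (q - k) * P ^ (k + 1) + ((k:ℂ) + 1) • ω • (K ^ (q - k - 1) * P ^ (k + 2))) := by
      have h1 : H * K ^ (q+1) = (H * K ^ q) * K := by rw [pow_succ, ← mul_assoc]
      rw [h1, ih, sub_mul, Finset.sum_mul, mul_assoc, hHK', mul_sub, ← mul_assoc, ← pow_succ]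
      congr 1
      refine Finset.sum_congr rfl fun k hk => ?_
      have hkq : k < q := mem_range.mp hk
      rw [smul_mul_assoc, smul_mul_assoc, mul_assoc, pK (k+1)]
      have hK : K ^ (q - k - 1) * K = K ^ (q - k) := by
        rw [← pow_succ]; congr 1; omega
      rw [mul_add, ← mul_assoc, hK]
      push_cast
      rw [mul_smul_comm, mul_smul_comm]
    -- the sum identity
    have hsum : (∑ k ∈ range (q+1),
          (((q+1).factorial : ℂ) / (((k + 1) : ℂ) * (((q+1) - k - 1).factorial : ℂ))) •
            ω ^ k • (K ^ ((q+1) - k - 1) * P ^ (k + 1)))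
        = K ^ q * P + ∑ k ∈ range q,
          ((q.factorial : ℂ) / (((k + 1) : ℂ) * ((q - k - 1).factorial : ℂ))) •
            ω ^ k • (K ^ (q - k) * P ^ (k + 1) + ((k:ℂ) + 1) • ω • (K ^ (q - k - 1) * P ^ (k + 2))) := by
      have hidx : ∀ k ∈ range (q+1),
          (((q+1).factorial : ℂ) / (((k + 1) : ℂ) * (((q+1) - k - 1).factorial : ℂ))) •
            ω ^ k • (K ^ ((q+1) - k - 1) * P ^ (k + 1))
          = (((q+1).factorial : ℂ) / (((k + 1) : ℂ) * ((q - k).factorial : ℂ))) •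
            ω ^ k • (K ^ (q - k) * P ^ (k + 1)) := by
        intro k hk
        have : (q + 1) - k - 1 = q - k := by omega
        rw [this]
      rw [Finset.sum_congr rfl hidx, Finset.sum_range_succ]
      -- split t k = a k + d k for k < q
      have hsplit : ∀ k ∈ range q,
          (((q+1).factorial : ℂ) / (((k + 1) : ℂ) * ((q - k).factorial : ℂ))) •
            ω ^ k • (K ^ (q - k) * P ^ (k + 1))
          = ((q.factorial : ℂ) / (((k + 1) : ℂ) * ((q - k - 1).factorial : ℂ))) •
              ω ^ k • (K ^ (q - k) * P ^ (k + 1))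
            + ((q.factorial : ℂ) / ((q - k).factorial : ℂ)) •
              ω ^ k • (K ^ (q - k) * P ^ (k + 1)) := by
        intro k hk
        rw [← add_smul, coeff q k (mem_range.mp hk)]
      rw [Finset.sum_congr rfl hsplit, Finset.sum_add_distrib]
      -- last term t q = d q
      have htq : (((q+1).factorial : ℂ) / (((q:ℂ) + 1) * ((q - q).factorial : ℂ))) •
            ω ^ q • (K ^ (q - q) * P ^ (q + 1))
          = ((q.factorial : ℂ) / ((q - q).factorial : ℂ)) •
            ω ^ q • (K ^ (q - q) * P ^ (q + 1)) := by
        congr 1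
        rw [Nat.sub_self, Nat.factorial_succ]
        have hq : ((q:ℂ) + 1) ≠ 0 := by
          exact_mod_cast (Nat.cast_ne_zero (R := ℂ)).mpr (Nat.succ_ne_zero q)
        push_cast
        field_simp
      rw [htq]
      -- now: Σ a + Σ d + d q = K^q P + Σ (a + b)
      have hd : (∑ k ∈ range q, ((q.factorial : ℂ) / ((q - k).factorial : ℂ)) •
              ω ^ k • (K ^ (q - k) * P ^ (k + 1)))
            + ((q.factorial : ℂ) / ((q - q).factorial : ℂ)) • ω ^ q • (K ^ (q - q) * P ^ (q + 1))
          = K ^ q * P + ∑ k ∈ range q,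
            ((q.factorial : ℂ) / (((k + 1) : ℂ) * ((q - k - 1).factorial : ℂ))) •
              ω ^ k • (((k:ℂ) + 1) • ω • (K ^ (q - k - 1) * P ^ (k + 2))) := by
        rw [← Finset.sum_range_succ, Finset.sum_range_succ', add_comm]
        congr 1
        · simp [Nat.sub_zero, div_self (Nat.cast_ne_zero (R := ℂ).mpr q.factorial_ne_zero)]
        · refine Finset.sum_congr rfl fun k hk => ?_
          have hkq : k < q := mem_range.mp hk
          have e : q - (k + 1) = q - k - 1 := by omega
          rw [e]
          simp only [smul_smul]
          congr 1
          have hne : ((q - k - 1).factorial : ℂ) ≠ 0 :=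
            Nat.cast_ne_zero.mpr (Nat.factorial_ne_zero _)
          have hk1 : ((k:ℂ) + 1) ≠ 0 := by
            exact_mod_cast (Nat.cast_ne_zero (R := ℂ)).mpr (Nat.succ_ne_zero k)
          field_simp
          ring
      calc (∑ k ∈ range q, ((q.factorial : ℂ) / (((k + 1) : ℂ) * ((q - k - 1).factorial : ℂ))) •
              ω ^ k • (K ^ (q - k) * P ^ (k + 1)))
            + (∑ k ∈ range q, ((q.factorial : ℂ) / ((q - k).factorial : ℂ)) •
              ω ^ k • (K ^ (q - k) * P ^ (k + 1)))
            + ((q.factorial : ℂ) / ((q - q).factorial : ℂ)) • ω ^ q • (K ^ (q - q) * P ^ (q + 1))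
          = (∑ k ∈ range q, ((q.factorial : ℂ) / (((k + 1) : ℂ) * ((q - k - 1).factorial : ℂ))) •
              ω ^ k • (K ^ (q - k) * P ^ (k + 1)))
            + (K ^ q * P + ∑ k ∈ range q,
              ((q.factorial : ℂ) / (((k + 1) : ℂ) * ((q - k - 1).factorial : ℂ))) •
                ω ^ k • (((k:ℂ) + 1) • ω • (K ^ (q - k - 1) * P ^ (k + 2)))) := by
              rw [add_assoc, hd]
        _ = K ^ q * P + ∑ k ∈ range q,
              ((q.factorial : ℂ) / (((k + 1) : ℂ) * ((q - k - 1).factorial : ℂ))) •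
                ω ^ k • (K ^ (q - k) * P ^ (k + 1) + ((k:ℂ) + 1) • ω • (K ^ (q - k - 1) * P ^ (k + 2))) := by
              simp only [smul_add, Finset.sum_add_distrib]
              abel
    rw [key, hsum]
    abel
end

section
/- In an associative algebra with elements H, P, K satisfying [H,K] = -P, [P,K] = ωP², [H,P] = 0, the iterated commutator satisfies H ⫤ K^{k+1} = -k! ω^k P^{k+1} for all k ≥ 0, where x ⫤ K denotes [x,K] iterated. -/
private lemma pow_comm_K {A : Type*} [Ring A] [Algebra ℂ A] (ω : ℂ) (P K : A)
    (hPK : P * K - K * P = ω • (P * P)) (n : ℕ) :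
    P ^ (n + 1) * K - K * P ^ (n + 1) = ((n + 1 : ℕ) : ℂ) • ω • P ^ (n + 2) := by
  induction n with
  | zero => simpa [pow_succ, mul_assoc] using hPK
  | succ n ih =>
    have key : P ^ (n + 2) * K - K * P ^ (n + 2)
        = P * (P ^ (n + 1) * K - K * P ^ (n + 1)) + (P * K - K * P) * P ^ (n + 1) := by
      rw [pow_succ' P (n + 1)]
      noncomm_ring
    rw [key, ih, hPK]
    rw [mul_smul_comm, mul_smul_comm, smul_mul_assoc]
    rw [show P * P ^ (n + 2) = P ^ (n + 3) by rw [← pow_succ']]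
    rw [show (P * P) * P ^ (n + 1) = P ^ (n + 3) by
      rw [mul_assoc, ← pow_succ', ← pow_succ']]
    push_cast
    match_scalars <;> ring

/-- In an associative unital `ℂ`-algebra with elements `H, P, K` satisfying
`[H,K] = -P`, `[P,K] = ωP²`, `[H,P] = 0`, the iterated right adjoint action satisfies
`H ⫤ K^(k+1) = -k! ω^k P^(k+1)` for all `k ≥ 0`, where `x ⫤ K = [x,K] = xK - Kx` iterated. -/
theorem standard_H_adK {A : Type*} [Ring A] [Algebra ℂ A] (ω : ℂ) (H P K : A)
    (hHK : H * K - K * H = -P) (hPK : P * K - K * P = ω • (P * P))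
    (hHP : H * P - P * H = 0) (k : ℕ) :
    (fun x : A => x * K - K * x)^[k + 1] H = -((k.factorial : ℂ) • ω ^ k • P ^ (k + 1)) := by
  induction k with
  | zero => simpa using hHK
  | succ k ih =>
    rw [Function.iterate_succ_apply', ih]
    simp only [neg_mul, mul_neg, neg_sub_neg]
    rw [smul_mul_assoc, smul_mul_assoc, mul_smul_comm, mul_smul_comm,
      ← smul_sub, ← smul_sub, ← neg_sub (P ^ (k + 1) * K), pow_comm_K ω P K hPK k]
    rw [Nat.factorial_succ]
    push_cast
    match_scalars <;> ring
end
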